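/- arXiv:2405.16765 — 3 statements merged into one kernel-verified Lean document; each statement's English description precedes it below -/
import Mathlib

section
/- For real parameters λ>0, γ>0, η>0 and any complex number x, the Minimax Logarithmic Concave function φ(x), defined piecewise as λ·log(|x|/η + 1) − log²(|x|/η + 1)/(2γ) when |x| ≤ η·e^{γλ} − η, and γλ²/2 when |x| > η·e^{γλ} − η, equals the minimum over w ≥ 0 of the expression w·log(|x|/η + 1) + (γ/2)(w − λ)². -/
/-!
The objective `w ↦ w * c + γ/2 * (w - λ)²` is a convex parabola with vertex `w = λ - c/γ`.
When `c ≤ γλ` the vertex is admissible and gives the value `λc - c²/(2γ)`; otherwise the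
objective is increasing on `[0, ∞)` and the minimum `γλ²/2` is attained at `w = 0`.
With `c = log (‖x‖/η + 1)`, the condition `c ≤ γλ` is exactly `‖x‖ ≤ η e^{γλ} - η`.
-/

noncomputable def mlc (lam gam eta : ℝ) (x : ℂ) : ℝ :=
  if ‖x‖ ≤ eta * Real.exp (gam * lam) - eta then
    lam * Real.log (‖x‖ / eta + 1) - (Real.log (‖x‖ / eta + 1)) ^ 2 / (2 * gam)
  else gam * lam ^ 2 / 2

section QuadraticPenalty

variable {lam gam c : ℝ}

theorem isLeast_mul_add_sq_of_le (hgam : 0 < gam) (hc : c ≤ gam * lam) :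
    IsLeast {v : ℝ | ∃ w : ℝ, 0 ≤ w ∧ v = w * c + gam / 2 * (w - lam) ^ 2}
      (lam * c - c ^ 2 / (2 * gam)) := by
  have hvertex : 0 ≤ lam - c / gam := by
    rw [sub_nonneg, div_le_iff₀ hgam]
    linarith
  refine ⟨⟨lam - c / gam, hvertex, by field_simp; ring⟩, ?_⟩
  rintro v ⟨w, -, rfl⟩
  have hsq : w * c + gam / 2 * (w - lam) ^ 2 - (lam * c - c ^ 2 / (2 * gam)) =
      gam / 2 * (w - (lam - c / gam)) ^ 2 := by
    field_simp
    ring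
  nlinarith [mul_nonneg hgam.le (sq_nonneg (w - (lam - c / gam)))]

theorem isLeast_mul_add_sq_of_ge (hgam : 0 ≤ gam) (hc : gam * lam ≤ c) :
    IsLeast {v : ℝ | ∃ w : ℝ, 0 ≤ w ∧ v = w * c + gam / 2 * (w - lam) ^ 2}
      (gam * lam ^ 2 / 2) := by
  refine ⟨⟨0, le_rfl, by ring⟩, ?_⟩
  rintro v ⟨w, hw, rfl⟩
  have hincr : w * c + gam / 2 * (w - lam) ^ 2 - gam * lam ^ 2 / 2 =
      w * (c - gam * lam) + gam / 2 * w ^ 2 := by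
    ring
  nlinarith [mul_nonneg hw (sub_nonneg.mpr hc), mul_nonneg hgam (sq_nonneg w)]

end QuadraticPenalty

theorem le_mul_exp_sub_iff_log_div_add_one_le {n eta t : ℝ} (heta : 0 < eta) (hn : 0 ≤ n) :
    n ≤ eta * Real.exp t - eta ↔ Real.log (n / eta + 1) ≤ t := by
  rw [Real.log_le_iff_le_exp (by positivity), div_add' _ _ _ heta.ne', div_le_iff₀ heta]
  constructor <;> intro h <;> linarith

theorem mlc_eq_min_general (lam gam eta : ℝ) (hgam : 0 < gam)
    (heta : 0 < eta) (x : ℂ) :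
    IsLeast {v : ℝ | ∃ w : ℝ, 0 ≤ w ∧
        v = w * Real.log (‖x‖ / eta + 1) + gam / 2 * (w - lam) ^ 2}
      (mlc lam gam eta x) := by
  unfold mlc
  split_ifs with hx
  · rw [le_mul_exp_sub_iff_log_div_add_one_le heta (norm_nonneg x)] at hx
    exact isLeast_mul_add_sq_of_le hgam hx
  · rw [le_mul_exp_sub_iff_log_div_add_one_le heta (norm_nonneg x), not_le] at hx
    exact isLeast_mul_add_sq_of_ge hgam.le hx.le

theorem mlc_eq_min (lam gam eta : ℝ) (hlam : 0 < lam) (hgam : 0 < gam)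
    (heta : 0 < eta) (x : ℂ) :
    IsLeast {v : ℝ | ∃ w : ℝ, 0 ≤ w ∧
        v = w * Real.log (‖x‖ / eta + 1) + gam / 2 * (w - lam) ^ 2}
      (mlc lam gam eta x) :=
  mlc_eq_min_general lam gam eta hgam heta x
end

section
/- The proximity operator of the MLC function equals a reweighted log proximity operator: for λ, γ, η, μ > 0 and c ∈ ℂ, argmin_x [μ·φ(x) + (1/2)|x − c|²] = argmin_x [μ·w*(x̂)·log(|x|/η + 1) + (1/2)|x − c|²] evaluated with the optimal weight w* = max{λ − log(|x̂|/η + 1)/γ, 0} at the minimizer x̂, i.e., any minimizer x̂ of the first problem is also a minimizer of the second problem with weight w*(x̂). -/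
/-!
Writing `L = log (|x|/η + 1)`, the MLC penalty is the half-quadratic minimum
`φ = min_{w ≥ 0} (w L + γ/2 (w - λ)²)`, attained at `w* = max (λ - L/γ) 0`.
Hence `μ φ(y) + ½|y - c|²` lies above `μ (w*(x̂) L(y) + γ/2 (w*(x̂) - λ)²) + ½|y - c|²`
for every `y`, with equality at `y = x̂`; a minimizer of the former is therefore a minimizer
of the latter, and the constant `γ/2 (w*(x̂) - λ)²` drops out.
-/

namespace MLC

/-- The MLC penalty as a function of `L = log (|x|/η + 1)`. -/
noncomputable def penalty (lam gam L : ℝ) : ℝ :=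
  if L ≤ gam * lam then lam * L - L ^ 2 / (2 * gam) else gam * lam ^ 2 / 2

noncomputable def halfQuadratic (lam gam w L : ℝ) : ℝ :=
  w * L + gam / 2 * (w - lam) ^ 2

noncomputable def optimalWeight (lam gam L : ℝ) : ℝ :=
  max (lam - L / gam) 0

lemma penalty_le_halfQuadratic {lam gam w : ℝ} (hgam : 0 < gam) (hw : 0 ≤ w) (L : ℝ) :
    penalty lam gam L ≤ halfQuadratic lam gam w L := by
  unfold penalty halfQuadratic
  split_ifs with hL
  · have hsq : w * L + gam / 2 * (w - lam) ^ 2 - (lam * L - L ^ 2 / (2 * gam)) =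
        gam / 2 * (w - lam + L / gam) ^ 2 := by
      field_simp
      ring
    nlinarith [sq_nonneg (w - lam + L / gam)]
  · nlinarith [mul_nonneg hw (sub_nonneg.mpr (not_le.mp hL).le), sq_nonneg w]

lemma penalty_eq_halfQuadratic_optimalWeight {lam gam : ℝ} (hgam : 0 < gam) (L : ℝ) :
    penalty lam gam L = halfQuadratic lam gam (optimalWeight lam gam L) L := by
  unfold penalty halfQuadratic optimalWeight
  split_ifs with hL
  · rw [max_eq_left (sub_nonneg.mpr ((div_le_iff₀ hgam).mpr (by linarith)))]
    field_simp
    ring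
  · rw [max_eq_right (sub_nonpos.mpr ((le_div_iff₀ hgam).mpr (by linarith)))]
    ring

lemma mlc_eq_penalty_log {lam gam eta : ℝ} (heta : 0 < eta) (x : ℂ) :
    mlc lam gam eta x = penalty lam gam (Real.log (‖x‖ / eta + 1)) := by
  have hthreshold : ‖x‖ ≤ eta * Real.exp (gam * lam) - eta ↔
      Real.log (‖x‖ / eta + 1) ≤ gam * lam := by
    rw [Real.log_le_iff_le_exp (by positivity), ← le_sub_iff_add_le, div_le_iff₀ heta]
    constructor <;> intro h <;> linarith
  simp only [mlc, penalty, hthreshold]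

end MLC

open MLC in
theorem mlc_prox_eq_weighted_log_prox_general (lam gam eta mu : ℝ)
    (hgam : 0 < gam) (heta : 0 < eta) (hmu : 0 < mu) (c : ℂ) (xhat : ℂ)
    (hmin : ∀ y : ℂ,
      mu * mlc lam gam eta xhat + (1 / 2) * ‖xhat - c‖ ^ 2 ≤
        mu * mlc lam gam eta y + (1 / 2) * ‖y - c‖ ^ 2) :
    let wstar : ℝ := max (lam - Real.log (‖xhat‖ / eta + 1) / gam) 0
    ∀ y : ℂ,
      mu * wstar * Real.log (‖xhat‖ / eta + 1) + (1 / 2) * ‖xhat - c‖ ^ 2 ≤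
        mu * wstar * Real.log (‖y‖ / eta + 1) + (1 / 2) * ‖y - c‖ ^ 2 := by
  intro wstar y
  have hxhat : mlc lam gam eta xhat =
      halfQuadratic lam gam wstar (Real.log (‖xhat‖ / eta + 1)) :=
    (mlc_eq_penalty_log heta xhat).trans (penalty_eq_halfQuadratic_optimalWeight hgam _)
  have hy : mlc lam gam eta y ≤ halfQuadratic lam gam wstar (Real.log (‖y‖ / eta + 1)) :=
    (mlc_eq_penalty_log heta y).trans_le (penalty_le_halfQuadratic hgam (le_max_right _ _) _)
  have hmu_y := mul_le_mul_of_nonneg_left hy hmu.le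
  have hmin_y := hmin y
  rw [hxhat] at hmin_y
  unfold halfQuadratic at hmin_y hmu_y
  linarith

theorem mlc_prox_eq_weighted_log_prox (lam gam eta mu : ℝ) (hlam : 0 < lam)
    (hgam : 0 < gam) (heta : 0 < eta) (hmu : 0 < mu) (c : ℂ) (xhat : ℂ)
    (hmin : ∀ y : ℂ,
      mu * mlc lam gam eta xhat + (1 / 2) * ‖xhat - c‖ ^ 2 ≤
        mu * mlc lam gam eta y + (1 / 2) * ‖y - c‖ ^ 2) :
    let wstar : ℝ := max (lam - Real.log (‖xhat‖ / eta + 1) / gam) 0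
    ∀ y : ℂ,
      mu * wstar * Real.log (‖xhat‖ / eta + 1) + (1 / 2) * ‖xhat - c‖ ^ 2 ≤
        mu * wstar * Real.log (‖y‖ / eta + 1) + (1 / 2) * ‖y - c‖ ^ 2 :=
  mlc_prox_eq_weighted_log_prox_general lam gam eta mu hgam heta hmu c xhat hmin
end

section
/- The function t ↦ λ·log(t/η + 1) − log²(t/η + 1)/(2γ) is concave on [0, η·e^{γλ} − η] for λ, γ, η > 0; hence the MLC function φ, viewed as a function of the modulus |x|, is concave on the interval where its first branch applies. -/
/-!
Write the function as `h ∘ u` with `u t = log (t / η + 1)` and `h u = λ u - u² / (2γ)`.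
The inner map `u` is concave, and `h` is a concave parabola that is increasing to the left of
its vertex `γλ`. The right endpoint `η e^{γλ} - η` is exactly where `u` reaches that vertex, so
on the interval the increasing concave `h` is composed with a concave map.
-/

open Set Real

theorem ConcaveOn.comp_of_mapsTo {𝕜 E α β : Type*} [Semiring 𝕜] [PartialOrder 𝕜]
    [AddCommMonoid E] [AddCommMonoid α] [PartialOrder α] [AddCommMonoid β] [PartialOrder β]
    [SMul 𝕜 E] [SMul 𝕜 α] [SMul 𝕜 β] {s : Set E} {t : Set β} {f : E → β} {g : β → α}
    (hg : ConcaveOn 𝕜 t g) (hf : ConcaveOn 𝕜 s f) (hg' : MonotoneOn g t) (hst : MapsTo f s t) :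
    ConcaveOn 𝕜 s (g ∘ f) :=
  ⟨hf.1, fun _ hx _ hy _ _ ha hb hab =>
    (hg.2 (hst hx) (hst hy) ha hb hab).trans <|
      hg' (hg.1 (hst hx) (hst hy) ha hb hab) (hst (hf.1 hx hy ha hb hab)) (hf.2 hx hy ha hb hab)⟩

theorem concaveOn_mul_sub_sq_div {gam : ℝ} (lam : ℝ) (hgam : 0 ≤ gam) :
    ConcaveOn ℝ univ (fun u : ℝ => lam * u - u ^ 2 / (2 * gam)) := by
  have hlin : ConcaveOn ℝ univ (fun u : ℝ => lam * u) :=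
    (LinearMap.mulLeft ℝ lam).concaveOn convex_univ
  have hsq : ConvexOn ℝ univ (fun u : ℝ => (2 * gam)⁻¹ • u ^ 2) :=
    even_two.convexOn_pow.smul (by positivity)
  exact (hlin.sub hsq).congr fun u _ => by
    simp only [Pi.sub_apply, smul_eq_mul, div_eq_inv_mul]

theorem monotoneOn_mul_sub_sq_div {gam : ℝ} (lam : ℝ) (hgam : 0 < gam) :
    MonotoneOn (fun u : ℝ => lam * u - u ^ 2 / (2 * gam)) (Iic (gam * lam)) := by
  intro a ha b hb hab
  have hdiff : lam * b - b ^ 2 / (2 * gam) - (lam * a - a ^ 2 / (2 * gam))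
      = (b - a) * (2 * gam * lam - a - b) / (2 * gam) := by
    field_simp
    ring
  have hnonneg : 0 ≤ (b - a) * (2 * gam * lam - a - b) / (2 * gam) :=
    div_nonneg (mul_nonneg (by linarith) (by linarith [mem_Iic.1 ha, mem_Iic.1 hb]))
      (by positivity)
  simp only
  linarith

theorem concaveOn_log_div_add_one {eta : ℝ} (heta : 0 < eta) :
    ConcaveOn ℝ (Ici 0) (fun t : ℝ => log (t / eta + 1)) := by
  have hlin : ConcaveOn ℝ (Ici 0) (fun t : ℝ => t / eta + 1) :=
    (((LinearMap.mulLeft ℝ eta⁻¹).concaveOn (convex_Ici 0)).add_const (1 : ℝ)).congr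
      fun t _ => by simp [div_eq_inv_mul]
  refine strictConcaveOn_log_Ioi.concaveOn.comp_of_mapsTo hlin strictMonoOn_log.monotoneOn ?_
  intro t ht
  have : 0 ≤ t / eta := div_nonneg ht heta.le
  exact mem_Ioi.2 (by linarith)

theorem mlc_branch_concave_general (lam gam eta : ℝ) (hgam : 0 < gam)
    (heta : 0 < eta) :
    ConcaveOn ℝ (Set.Icc 0 (eta * Real.exp (gam * lam) - eta))
      (fun t : ℝ =>
        lam * Real.log (t / eta + 1) - (Real.log (t / eta + 1)) ^ 2 / (2 * gam)) := by
  have hmaps : MapsTo (fun t : ℝ => log (t / eta + 1))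
      (Icc 0 (eta * exp (gam * lam) - eta)) (Iic (gam * lam)) := by
    rintro t ⟨ht0, htT⟩
    have hpos : 0 < t / eta + 1 := by positivity
    refine mem_Iic.2 ((log_le_iff_le_exp hpos).2 ?_)
    rw [div_add_one heta.ne', div_le_iff₀ heta]
    linarith
  exact ConcaveOn.comp_of_mapsTo
    ((concaveOn_mul_sub_sq_div lam hgam.le).subset (subset_univ _) (convex_Iic _))
    ((concaveOn_log_div_add_one heta).subset Icc_subset_Ici_self (convex_Icc _ _))
    (monotoneOn_mul_sub_sq_div lam hgam) hmaps

theorem mlc_branch_concave (lam gam eta : ℝ) (hlam : 0 < lam) (hgam : 0 < gam)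
    (heta : 0 < eta) :
    ConcaveOn ℝ (Set.Icc 0 (eta * Real.exp (gam * lam) - eta))
      (fun t : ℝ =>
        lam * Real.log (t / eta + 1) - (Real.log (t / eta + 1)) ^ 2 / (2 * gam)) :=
  mlc_branch_concave_general lam gam eta hgam heta
end
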